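/- arXiv:1209.2539 — 2 statements merged into one kernel-verified Lean document; each statement's English description precedes it below -/
import Mathlib

section
/- Consider the chain-of-oscillators operator P̃_W = (γ/2)∑_{j=1,2} α_j(-h∂_{z_j})(h∂_{z_j} + (2/α_j)(z_j - x_j)) + y·h∂_x - (∂_x W(x) + x - z)·h∂_y on R^{6n} with equal temperatures α_1 = α_2 = α. With φ = (1/α)(W(x) + y²/2 + (z-x)²/2), one has P̃_W(e^{-2φ/h}) = 0 for all h > 0. -/
open Real

/-- One block of variables: two groups of `n` real coordinates. -/
abbrev Blk (n : ℕ) := Fin 2 → Fin n → ℝ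

/-- Points `(x, y, z)` of `ℝ^{6n}`. -/
abbrev ChainSpace (n : ℕ) := Blk n × Blk n × Blk n

/-- Partial derivatives in the `x`, `y`, `z` directions. -/
noncomputable def pdx {n : ℕ} (j : Fin 2) (i : Fin n) (u : ChainSpace n → ℝ)
    (p : ChainSpace n) : ℝ := fderiv ℝ u p (Pi.single j (Pi.single i 1), 0, 0)

noncomputable def pdy {n : ℕ} (j : Fin 2) (i : Fin n) (u : ChainSpace n → ℝ)
    (p : ChainSpace n) : ℝ := fderiv ℝ u p (0, Pi.single j (Pi.single i 1), 0)

noncomputable def pdz {n : ℕ} (j : Fin 2) (i : Fin n) (u : ChainSpace n → ℝ)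
    (p : ChainSpace n) : ℝ := fderiv ℝ u p (0, 0, Pi.single j (Pi.single i 1))

/-- Partial derivative `∂_{x_{j,i}} W` of the effective potential. -/
noncomputable def pdW {n : ℕ} (j : Fin 2) (i : Fin n) (W : Blk n → ℝ) (x : Blk n) : ℝ :=
  fderiv ℝ W x (Pi.single j (Pi.single i 1))

/-- The chain-of-oscillators operator
`P̃_W = (γ/2)∑_j α_j(-h∂_{z_j})(h∂_{z_j} + (2/α_j)(z_j - x_j)) + y·h∂_x - (∂_xW + x - z)·h∂_y`. -/
noncomputable def chainOp {n : ℕ} (γ h : ℝ) (α : Fin 2 → ℝ) (W : Blk n → ℝ)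
    (f : ChainSpace n → ℝ) (p : ChainSpace n) : ℝ :=
  (γ / 2) * ∑ j, α j * ∑ i,
      -(h * pdz j i (fun q =>
          h * pdz j i f q + (2 / α j) * (q.2.2 j i - q.1 j i) * f q) p)
    + ∑ j, ∑ i, p.2.1 j i * (h * pdx j i f p)
    - ∑ j, ∑ i, (pdW j i W p.1 + p.1 j i - p.2.2 j i) * (h * pdy j i f p)


noncomputable def coordX (n : ℕ) (j : Fin 2) (i : Fin n) : ChainSpace n →L[ℝ] ℝ :=
  (ContinuousLinearMap.proj i).comp ((ContinuousLinearMap.proj j).comp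
    (ContinuousLinearMap.fst ℝ (Blk n) (Blk n × Blk n)))
noncomputable def coordY (n : ℕ) (j : Fin 2) (i : Fin n) : ChainSpace n →L[ℝ] ℝ :=
  (ContinuousLinearMap.proj i).comp ((ContinuousLinearMap.proj j).comp
    ((ContinuousLinearMap.fst ℝ (Blk n) (Blk n)).comp (ContinuousLinearMap.snd ℝ (Blk n) (Blk n × Blk n))))
noncomputable def coordZ (n : ℕ) (j : Fin 2) (i : Fin n) : ChainSpace n →L[ℝ] ℝ :=
  (ContinuousLinearMap.proj i).comp ((ContinuousLinearMap.proj j).comp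
    ((ContinuousLinearMap.snd ℝ (Blk n) (Blk n)).comp (ContinuousLinearMap.snd ℝ (Blk n) (Blk n × Blk n))))

lemma sum_single {n : ℕ} (j : Fin 2) (i : Fin n) (c : Fin 2 → Fin n → ℝ) :
    ∑ j' : Fin 2, ∑ i' : Fin n,
      c j' i' * ((Pi.single j (Pi.single i (1:ℝ)) : Fin 2 → Fin n → ℝ) j' i') = c j i := by
  simp [Pi.single_apply, ite_apply, Finset.sum_ite_eq', mul_ite]

set_option maxHeartbeats 2000000 in
lemma keylem {n : ℕ} (α h : ℝ) (hα : α ≠ 0) (hh : h ≠ 0) (W : Blk n → ℝ)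
    (hW : Differentiable ℝ W) (p v : ChainSpace n) :
    fderiv ℝ (fun q : ChainSpace n => Real.exp (-2 * ((1 / α) * (W q.1
        + (∑ j, ∑ i, (q.2.1 j i) ^ 2) / 2
        + (∑ j, ∑ i, (q.2.2 j i - q.1 j i) ^ 2) / 2)) / h)) p v
      = Real.exp (-2 * ((1 / α) * (W p.1 + (∑ j, ∑ i, (p.2.1 j i) ^ 2) / 2
          + (∑ j, ∑ i, (p.2.2 j i - p.1 j i) ^ 2) / 2)) / h) * (-2 / (h * α))
        * (fderiv ℝ W p.1 v.1 + ∑ j, ∑ i, p.2.1 j i * v.2.1 j i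
          + ∑ j, ∑ i, (p.2.2 j i - p.1 j i) * (v.2.2 j i - v.1 j i)) := by
  have h1 : HasFDerivAt (fun q : ChainSpace n => W q.1)
      ((fderiv ℝ W p.1).comp (ContinuousLinearMap.fst ℝ (Blk n) (Blk n × Blk n))) p :=
    (hW p.1).hasFDerivAt.comp p hasFDerivAt_fst
  have hY : ∀ (j : Fin 2) (i : Fin n), HasFDerivAt (fun q : ChainSpace n => (q.2.1 j i) ^ 2)
      (p.2.1 j i • coordY n j i + p.2.1 j i • coordY n j i) p := fun j i => by
    simp only [pow_two]; exact (coordY n j i).hasFDerivAt.mul (coordY n j i).hasFDerivAt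
  have hZ : ∀ (j : Fin 2) (i : Fin n),
      HasFDerivAt (fun q : ChainSpace n => (q.2.2 j i - q.1 j i) ^ 2)
      ((p.2.2 j i - p.1 j i) • (coordZ n j i - coordX n j i)
        + (p.2.2 j i - p.1 j i) • (coordZ n j i - coordX n j i)) p := fun j i => by
    have hc : HasFDerivAt (fun q : ChainSpace n => q.2.2 j i - q.1 j i)
        (coordZ n j i - coordX n j i) p :=
      (coordZ n j i).hasFDerivAt.sub (coordX n j i).hasFDerivAt
    simp only [pow_two]; exact hc.mul hc
  have hsY : HasFDerivAt (fun q : ChainSpace n => ∑ j, ∑ i, (q.2.1 j i) ^ 2)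
      (∑ j, ∑ i, (p.2.1 j i • coordY n j i + p.2.1 j i • coordY n j i)) p :=
    HasFDerivAt.fun_sum fun j _ => HasFDerivAt.fun_sum fun i _ => hY j i
  have hsZ : HasFDerivAt (fun q : ChainSpace n => ∑ j, ∑ i, (q.2.2 j i - q.1 j i) ^ 2)
      (∑ j, ∑ i, ((p.2.2 j i - p.1 j i) • (coordZ n j i - coordX n j i)
        + (p.2.2 j i - p.1 j i) • (coordZ n j i - coordX n j i))) p :=
    HasFDerivAt.fun_sum fun j _ => HasFDerivAt.fun_sum fun i _ => hZ j i
  set DY := ∑ j, ∑ i, (p.2.1 j i • coordY n j i + p.2.1 j i • coordY n j i) with hDY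
  set DZ := ∑ j, ∑ i, ((p.2.2 j i - p.1 j i) • (coordZ n j i - coordX n j i)
    + (p.2.2 j i - p.1 j i) • (coordZ n j i - coordX n j i)) with hDZ
  set DW := (fderiv ℝ W p.1).comp (ContinuousLinearMap.fst ℝ (Blk n) (Blk n × Blk n)) with hDW
  have hφ : HasFDerivAt (fun q : ChainSpace n => (1 / α) * (W q.1
      + (∑ j, ∑ i, (q.2.1 j i) ^ 2) / 2 + (∑ j, ∑ i, (q.2.2 j i - q.1 j i) ^ 2) / 2))
      ((1 / α) • (DW + (2:ℝ)⁻¹ • DY + (2:ℝ)⁻¹ • DZ)) p := by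
    have := ((h1.add (hsY.mul_const (2:ℝ)⁻¹)).add (hsZ.mul_const (2:ℝ)⁻¹)).const_mul (1 / α)
    simpa [div_eq_mul_inv] using this
  have hf : HasFDerivAt (fun q : ChainSpace n => -2 * ((1 / α) * (W q.1
      + (∑ j, ∑ i, (q.2.1 j i) ^ 2) / 2 + (∑ j, ∑ i, (q.2.2 j i - q.1 j i) ^ 2) / 2)) / h)
      (h⁻¹ • ((-2:ℝ) • ((1 / α) • (DW + (2:ℝ)⁻¹ • DY + (2:ℝ)⁻¹ • DZ)))) p := by
    simpa [div_eq_mul_inv] using (hφ.const_mul (-2)).mul_const h⁻¹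
  have he := hf.exp
  rw [he.fderiv]
  simp only [ContinuousLinearMap.smul_apply, ContinuousLinearMap.add_apply,
    ContinuousLinearMap.coe_smul', Pi.smul_apply, ContinuousLinearMap.sum_apply,
    ContinuousLinearMap.sub_apply, ContinuousLinearMap.comp_apply,
    ContinuousLinearMap.coe_fst', ContinuousLinearMap.coe_snd', smul_eq_mul,
    coordX, coordY, coordZ, ContinuousLinearMap.proj_apply]
  have hDWv : DW v = fderiv ℝ W p.1 v.1 := rfl
  have hDYv : DY v = 2 * ∑ j, ∑ i, p.2.1 j i * v.2.1 j i := by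
    simp only [hDY, ContinuousLinearMap.sum_apply, ContinuousLinearMap.add_apply,
      ContinuousLinearMap.smul_apply, smul_eq_mul, coordY, ContinuousLinearMap.comp_apply,
      ContinuousLinearMap.proj_apply, ContinuousLinearMap.coe_fst', ContinuousLinearMap.coe_snd']
    rw [Finset.mul_sum]
    refine Finset.sum_congr rfl fun j _ => ?_
    rw [Finset.mul_sum]
    exact Finset.sum_congr rfl fun i _ => by ring
  have hDZv : DZ v = 2 * ∑ j, ∑ i, (p.2.2 j i - p.1 j i) * (v.2.2 j i - v.1 j i) := by
    simp only [hDZ, ContinuousLinearMap.sum_apply, ContinuousLinearMap.add_apply,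
      ContinuousLinearMap.smul_apply, smul_eq_mul, ContinuousLinearMap.sub_apply,
      coordY, coordZ, coordX, ContinuousLinearMap.comp_apply,
      ContinuousLinearMap.proj_apply, ContinuousLinearMap.coe_fst', ContinuousLinearMap.coe_snd']
    rw [Finset.mul_sum]
    refine Finset.sum_congr rfl fun j _ => ?_
    rw [Finset.mul_sum]
    exact Finset.sum_congr rfl fun i _ => by ring
  rw [hDWv, hDYv, hDZv]
  field_simp

set_option maxHeartbeats 2000000 in
/-- in the equal-temperature case `α₁ = α₂ = α`, with
`φ = (1/α)(W(x) + y²/2 + (z-x)²/2)`, one has `P̃_W(e^{-2φ/h}) = 0` for all `h > 0`. -/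
theorem stmt9 {n : ℕ} (γ α : ℝ) (hγ : 0 < γ) (hα : 0 < α)
    (W : Blk n → ℝ) (hW : ContDiff ℝ (⊤ : ℕ∞) W)
    (φ : ChainSpace n → ℝ)
    (hφ : ∀ p, φ p = (1 / α) * (W p.1 + (∑ j, ∑ i, (p.2.1 j i) ^ 2) / 2
        + (∑ j, ∑ i, (p.2.2 j i - p.1 j i) ^ 2) / 2)) :
    ∀ h : ℝ, 0 < h → ∀ p,
      chainOp γ h (fun _ => α) W (fun q => exp (-2 * φ q / h)) p = 0 := by
  intro h hh p
  have hφfun : φ = fun q : ChainSpace n => (1 / α) * (W q.1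
      + (∑ j, ∑ i, (q.2.1 j i) ^ 2) / 2
      + (∑ j, ∑ i, (q.2.2 j i - q.1 j i) ^ 2) / 2) := funext hφ
  subst hφfun
  have key := keylem α h hα.ne' hh.ne' W (hW.differentiable (by simp))
  set E : ChainSpace n → ℝ := fun q => rexp (-2 * ((1 / α) * (W q.1
      + (∑ j, ∑ i, (q.2.1 j i) ^ 2) / 2
      + (∑ j, ∑ i, (q.2.2 j i - q.1 j i) ^ 2) / 2)) / h) with hE
  have hpz : ∀ (j : Fin 2) (i : Fin n) (q : ChainSpace n),
      pdz j i (fun q : ChainSpace n => rexp (-2 * ((1 / α) * (W q.1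
        + (∑ j, ∑ i, (q.2.1 j i) ^ 2) / 2
        + (∑ j, ∑ i, (q.2.2 j i - q.1 j i) ^ 2) / 2)) / h)) q
      = E q * (-2 / (h * α)) * (q.2.2 j i - q.1 j i) := by
    intro j i q
    rw [pdz, key q (0, 0, Pi.single j (Pi.single i 1))]
    simp only [hE, map_zero, Pi.zero_apply, mul_zero, Finset.sum_const_zero, add_zero,
      zero_add, sub_zero]
    rw [sum_single j i fun a b => q.2.2 a b - q.1 a b]
  have hpx : ∀ (j : Fin 2) (i : Fin n),
      pdx j i (fun q : ChainSpace n => rexp (-2 * ((1 / α) * (W q.1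
        + (∑ j, ∑ i, (q.2.1 j i) ^ 2) / 2
        + (∑ j, ∑ i, (q.2.2 j i - q.1 j i) ^ 2) / 2)) / h)) p
      = E p * (-2 / (h * α)) * (pdW j i W p.1 - (p.2.2 j i - p.1 j i)) := by
    intro j i
    rw [pdx, key p (Pi.single j (Pi.single i 1), 0, 0)]
    simp only [hE, pdW, Pi.zero_apply, mul_zero, Finset.sum_const_zero, add_zero, zero_sub,
      mul_neg, Finset.sum_neg_distrib]
    rw [sum_single j i fun a b => p.2.2 a b - p.1 a b]
    ring
  have hpy : ∀ (j : Fin 2) (i : Fin n),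
      pdy j i (fun q : ChainSpace n => rexp (-2 * ((1 / α) * (W q.1
        + (∑ j, ∑ i, (q.2.1 j i) ^ 2) / 2
        + (∑ j, ∑ i, (q.2.2 j i - q.1 j i) ^ 2) / 2)) / h)) p
      = E p * (-2 / (h * α)) * p.2.1 j i := by
    intro j i
    rw [pdy, key p (0, Pi.single j (Pi.single i 1), 0)]
    simp only [hE, map_zero, Pi.zero_apply, sub_self, mul_zero, Finset.sum_const_zero,
      add_zero, zero_add]
    rw [sum_single j i fun a b => p.2.1 a b]
  simp only [chainOp]
  have hz0 : ∀ (j : Fin 2) (i : Fin n),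
      pdz j i (fun q : ChainSpace n =>
        h * pdz j i (fun q : ChainSpace n => rexp (-2 * ((1 / α) * (W q.1
          + (∑ j, ∑ i, (q.2.1 j i) ^ 2) / 2
          + (∑ j, ∑ i, (q.2.2 j i - q.1 j i) ^ 2) / 2)) / h)) q
        + 2 / (fun _ : Fin 2 => α) j * (q.2.2 j i - q.1 j i)
          * rexp (-2 * ((1 / α) * (W q.1
          + (∑ j, ∑ i, (q.2.1 j i) ^ 2) / 2
          + (∑ j, ∑ i, (q.2.2 j i - q.1 j i) ^ 2) / 2)) / h)) p = 0 := by
    intro j i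
    have hfn : (fun q : ChainSpace n =>
        h * pdz j i (fun q : ChainSpace n => rexp (-2 * ((1 / α) * (W q.1
          + (∑ j, ∑ i, (q.2.1 j i) ^ 2) / 2
          + (∑ j, ∑ i, (q.2.2 j i - q.1 j i) ^ 2) / 2)) / h)) q
        + 2 / (fun _ : Fin 2 => α) j * (q.2.2 j i - q.1 j i)
          * rexp (-2 * ((1 / α) * (W q.1
          + (∑ j, ∑ i, (q.2.1 j i) ^ 2) / 2
          + (∑ j, ∑ i, (q.2.2 j i - q.1 j i) ^ 2) / 2)) / h))
        = fun _ => (0 : ℝ) := by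
      funext q
      rw [hpz j i q]
      have : E q = rexp (-2 * ((1 / α) * (W q.1
          + (∑ j, ∑ i, (q.2.1 j i) ^ 2) / 2
          + (∑ j, ∑ i, (q.2.2 j i - q.1 j i) ^ 2) / 2)) / h) := rfl
      rw [← this]
      field_simp
      ring
    rw [pdz, hfn]
    simp
  rw [Finset.sum_congr rfl fun (j : Fin 2) _ => by
    rw [Finset.sum_congr rfl fun (i : Fin n) _ => by rw [hz0 j i]]]
  simp only [mul_zero, neg_zero, Finset.sum_const_zero, mul_zero, add_zero, zero_add]
  rw [sub_eq_zero]
  refine Finset.sum_congr rfl fun j _ => Finset.sum_congr rfl fun i _ => ?_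
  rw [hpx j i, hpy j i]
  ring
end

section
/- Let w > 0 and let λ be a complex root of λ³ - λ² + (1+w)λ - w = 0. Then Re(λ) > 0. Moreover, if w < 0, the cubic has exactly one negative real root and the other two roots have positive real parts; if w = 0, the roots are 0 and two roots with positive real parts. -/
/-- The cubic `λ³ - λ² + (1+w)λ - w` arising from the linearization of the chain. -/
def cubic (w : ℝ) (l : ℂ) : ℂ := l ^ 3 - l ^ 2 + (1 + (w : ℂ)) * l - (w : ℂ)

lemma cubic_ofReal (w x : ℝ) : cubic w (x : ℂ) = ((x^3 - x^2 + (1+w)*x - w : ℝ) : ℂ) := by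
  simp only [cubic]; push_cast; ring

lemma real_root (w x : ℝ) (h : cubic w (x : ℂ) = 0) : x^3 - x^2 + (1+w)*x - w = 0 := by
  rw [cubic_ofReal] at h; exact_mod_cast h

lemma root_parts (w : ℝ) (l : ℂ) (h : cubic w l = 0) :
    l.re^3 - 3*l.re*l.im^2 - l.re^2 + l.im^2 + (1+w)*l.re - w = 0 ∧
    l.im * (3*l.re^2 - l.im^2 - 2*l.re + 1 + w) = 0 := by
  have hre := congrArg Complex.re h
  have him := congrArg Complex.im h
  simp only [cubic, Complex.add_re, Complex.sub_re, Complex.mul_re, Complex.mul_im,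
    Complex.add_im, Complex.sub_im, Complex.ofReal_re, Complex.ofReal_im, Complex.one_re,
    Complex.one_im, Complex.zero_re, Complex.zero_im, pow_succ, pow_zero, one_mul] at hre him
  constructor
  · linarith [hre]
  · linarith [him]

lemma nonreal_pos (w : ℝ) (l : ℂ) (h : cubic w l = 0) (hb : l.im ≠ 0) : 0 < l.re := by
  obtain ⟨hR, hI0⟩ := root_parts w l h
  set a := l.re; set b := l.im
  have hI : 3*a^2 - b^2 - 2*a + 1 + w = 0 := by
    rcases mul_eq_zero.mp hI0 with h' | h'
    · exact absurd h' hb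
    · exact h'
  have key : 2*a*(b^2+(a-1)^2) = 1 := by linear_combination (-1)*hR + (a-1)*hI
  have hb2 : 0 < b^2 := by positivity
  nlinarith [sq_nonneg (a-1)]

/-- for `w > 0` every complex root of `λ³ - λ² + (1+w)λ - w = 0` has
positive real part; for `w < 0` there is exactly one negative real root and every other
root has positive real part; for `w = 0` the roots are `0` together with roots of
positive real part. -/
theorem stmt16 (w : ℝ) :
    (0 < w → ∀ l : ℂ, cubic w l = 0 → 0 < l.re) ∧
      (w < 0 → (∃! l : ℝ, l < 0 ∧ cubic w (l : ℂ) = 0) ∧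
        ∀ l : ℂ, cubic w l = 0 → ¬(0 < l.re) → l.im = 0 ∧ l.re < 0) ∧
      (w = 0 → cubic w 0 = 0 ∧ ∀ l : ℂ, cubic w l = 0 → l = 0 ∨ 0 < l.re) := by
  refine ⟨?_, ?_, ?_⟩
  · -- w > 0
    intro hw l hl
    by_cases hb : l.im = 0
    · have hlr : l = (l.re : ℂ) := (Complex.ext_iff.mpr ⟨rfl, by simp [hb]⟩)
      rw [hlr] at hl
      have hf := real_root w l.re hl
      by_contra hpos
      push_neg at hpos
      nlinarith [sq_nonneg (l.re - 1), sq_nonneg l.re]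
    · exact nonreal_pos w l hl hb
  · -- w < 0
    intro hw
    constructor
    · -- existence & uniqueness of negative real root
      set c : ℝ := 1 - w with hc
      have hc1 : 1 ≤ c := by simp [hc]; linarith
      have hfneg : (-c)^3 - (-c)^2 + (1+w)*(-c) - w < 0 := by nlinarith
      have hf0 : (0:ℝ)^3 - 0^2 + (1+w)*0 - w > 0 := by simp; linarith
      have hcont : ContinuousOn (fun x : ℝ => x^3 - x^2 + (1+w)*x - w) (Set.Icc (-c) 0) := by
        fun_prop
      have hmem : (0:ℝ) ∈ Set.Icc ((-c)^3 - (-c)^2 + (1+w)*(-c) - w)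
          ((0:ℝ)^3 - 0^2 + (1+w)*0 - w) := ⟨le_of_lt hfneg, le_of_lt hf0⟩
      have hsub := intermediate_value_Icc (by linarith : (-c:ℝ) ≤ 0) hcont
      obtain ⟨x, hxmem, hx⟩ := hsub hmem
      simp only at hx
      have hxne : x ≠ 0 := by
        rintro rfl; rw [hx] at hf0; exact lt_irrefl 0 hf0
      have hxneg : x < 0 := lt_of_le_of_ne hxmem.2 hxne
      refine ⟨x, ⟨hxneg, ?_⟩, ?_⟩
      · rw [cubic_ofReal]; exact_mod_cast hx
      · rintro y ⟨hyneg, hy⟩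
        have hfy := real_root w y hy
        have hfx : x^3 - x^2 + (1+w)*x - w = 0 := hx
        by_contra hne
        have hsub0 : (y - x) * (y^2 + y*x + x^2 - y - x + 1 + w) = 0 := by
          linear_combination hfy - hfx
        have hS : y^2 + y*x + x^2 - y - x + 1 + w = 0 := by
          rcases mul_eq_zero.mp hsub0 with h' | h'
          · exact absurd (by linarith [sub_eq_zero.mp h'] : y = x) hne
          · exact h'
        nlinarith [mul_pos (mul_pos (neg_pos.mpr hxneg) (neg_pos.mpr hyneg))
            (by linarith : (0:ℝ) < -(x+y)), sq_nonneg (x+y), mul_pos (neg_pos.mpr hxneg) (neg_pos.mpr hyneg)]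
    · intro l hl hpos
      have hb : l.im = 0 := by
        by_contra hb
        exact hpos (nonreal_pos w l hl hb)
      refine ⟨hb, ?_⟩
      have hlr : l = (l.re : ℂ) := (Complex.ext_iff.mpr ⟨rfl, by simp [hb]⟩)
      rw [hlr] at hl
      have hf := real_root w l.re hl
      push_neg at hpos
      rcases lt_or_eq_of_le hpos with h' | h'
      · exact h'
      · exfalso; rw [h'] at hf; norm_num at hf; linarith
  · -- w = 0
    rintro rfl
    constructor
    · simp [cubic]
    · intro l hl
      by_cases hb : l.im = 0
      · left
        have hlr : l = (l.re : ℂ) := (Complex.ext_iff.mpr ⟨rfl, by simp [hb]⟩)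
        rw [hlr] at hl
        have hf := real_root 0 l.re hl
        have : l.re = 0 := by nlinarith [sq_nonneg (l.re - 1), sq_nonneg l.re, sq_nonneg (2*l.re-1)]
        rw [hlr, this]; simp
      · right; exact nonreal_pos 0 l hl hb
end
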